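/- The projection onto the first h-1 coordinates pr : F_h^{kh}(k,kh) → F_{h-1}^{k(h-1)}(k,kh) is a locally trivial fibration whose fiber over a point V₀ = (H₁,…,H_{h-1}) is the set {H ∈ Gr(k,kh) : H ⊕ (H₁+⋯+H_{h-1}) = ℂ^{kh}}, which is homeomorphic to ℂ^{k(kh-k)}. -/

import Mathlib

open Topology Matrix Module

/-- The complex Stiefel manifold `V(k,n)`: ordered `k`-tuples of orthonormal vectors in
`ℂ^n`, realized as `k × n` complex matrices with orthonormal rows. -/
def Stiefel (k n : ℕ) : Type :=
  {A : Matrix (Fin k) (Fin n) ℂ // A * Aᴴ = 1}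

noncomputable instance (k n : ℕ) : TopologicalSpace (Stiefel k n) :=
  instTopologicalSpaceSubtype

/-- The complex Grassmannian `Gr(k,n)` of `k`-dimensional subspaces of `ℂ^n`, realized as
hermitian idempotent `n × n` complex matrices (orthogonal projectors) of rank `k`. -/
def Grass (k n : ℕ) : Type :=
  {P : Matrix (Fin n) (Fin n) ℂ // P * P = P ∧ Pᴴ = P ∧ P.rank = k}

noncomputable instance (k n : ℕ) : TopologicalSpace (Grass k n) :=
  instTopologicalSpaceSubtype

/-- The `k`-dimensional subspace of `ℂ^n` corresponding to a point of `Gr(k,n)`: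
the range of the associated projector. -/
noncomputable def Grass.sp {k n : ℕ} (P : Grass k n) : Submodule ℂ (Fin n → ℂ) :=
  LinearMap.range P.1.mulVecLin

/-- The ordered configuration space `F_h^i(k,n)` of `h` pairwise distinct points of
`Gr(k,n)` whose sum is a subspace of dimension `i`. -/
def Config (h i k n : ℕ) : Type :=
  {H : Fin h → Grass k n // Function.Injective H ∧
    finrank ℂ ↥(⨆ j, (H j).sp : Submodule ℂ (Fin n → ℂ)) = i}

noncomputable instance (h i k n : ℕ) : TopologicalSpace (Config h i k n) :=
  instTopologicalSpaceSubtype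

/-- `p : E → B` is a locally trivial fibration with fiber `F`: every point of the base has
an open neighborhood `U` over which `p` is trivial, i.e. there is a homeomorphism
`p⁻¹(U) ≃ₜ U × F` over `U`. -/
def IsLocTrivFibration {E B : Type*} (F : Type*) [TopologicalSpace E] [TopologicalSpace B]
    [TopologicalSpace F] (p : E → B) : Prop :=
  ∀ b : B, ∃ U : Set B, IsOpen U ∧ b ∈ U ∧
    ∃ e : {x : E // p x ∈ U} ≃ₜ U × F, ∀ x, ((e x).1 : B) = p x.1

/-!
Appending a last subspace `W` to `V = (H₁, …, H_{h-1})` gives a point of `F_h` exactly when `W`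
is a complement of `S(V) = H₁ + ⋯ + H_{h-1}`, so `F_h` is the bundle over `F_{h-1}` of
complements of `S(V)`. Complements of a subspace `S = range E` are charted by graphs: if the
columns of `B` and `E` are jointly independent, `X ↦ range (B + E X)` identifies matrices with
complements of `S`, the inverse being a least-squares solve. Near `V₀`, if `E₀` is a frame of
`S(V₀)` and `P₁, …, P_{h-1}` are the orthogonal projectors of `V`, then `(P₁ + ⋯ + P_{h-1}) E₀`
is a frame of `S(V)` varying continuously with `V` as long as `E₀ᴴ (P₁ + ⋯ + P_{h-1}) E₀` stays
invertible, and a fixed frame `B` of `S(V₀)ᗮ` stays transversal to it. This trivializes the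
bundle over that open neighbourhood of `V₀`.
-/

open ComplexOrder

theorem Fin.iSup_snoc {α : Type*} [CompleteLattice α] {h : ℕ} (f : Fin h → α) (a : α) :
    ⨆ j, Fin.snoc (α := fun _ => α) f a j = (⨆ j, f j) ⊔ a := by
  apply le_antisymm
  · refine iSup_le fun j => ?_
    induction j using Fin.lastCases with
    | last => simp
    | cast j => simpa using le_sup_of_le_left (le_iSup f j)
  · refine sup_le (iSup_le fun j => ?_) ?_
    · simpa using le_iSup (Fin.snoc (α := fun _ => α) f a) j.castSucc
    · simpa using le_iSup (Fin.snoc (α := fun _ => α) f a) (Fin.last h)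

theorem Submodule.isCompl_of_sup_eq_top {K V : Type*} [DivisionRing K] [AddCommGroup V]
    [Module K V] [FiniteDimensional K V] {s t : Submodule K V} (hst : s ⊔ t = ⊤)
    (hdim : finrank K s + finrank K t ≤ finrank K V) : IsCompl s t := by
  refine ⟨disjoint_iff.2 (Submodule.finrank_eq_zero.1 ?_), codisjoint_iff.2 hst⟩
  have := Submodule.finrank_sup_add_finrank_inf_eq s t
  rw [hst, finrank_top] at this
  omega

theorem Submodule.exists_injective_matrix_range_eq {m n : ℕ} (U : Submodule ℂ (Fin n → ℂ))
    (hU : finrank ℂ U = m) : ∃ E : Matrix (Fin n) (Fin m) ℂ,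
      Function.Injective E.mulVec ∧ LinearMap.range E.mulVecLin = U := by
  let f := U.subtype ∘ₗ (finBasisOfFinrankEq ℂ U hU).equivFun.symm.toLinearMap
  have hf : (LinearMap.toMatrix' f).mulVecLin = f := by
    rw [← Matrix.toLin'_apply', Matrix.toLin'_toMatrix']
  refine ⟨LinearMap.toMatrix' f, ?_, ?_⟩
  · change Function.Injective (LinearMap.toMatrix' f).mulVecLin
    rw [hf]
    exact Subtype.val_injective.comp (LinearEquiv.injective _)
  · rw [hf, LinearMap.range_comp_of_range_eq_top _ (LinearEquiv.range _), Submodule.range_subtype]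

namespace Matrix

section Range

variable {l m n : Type*}

theorem mul_eq_right_of_range_le [Fintype l] [Fintype n] {S : Matrix n n ℂ} {R : Matrix n l ℂ}
    (hS : S * S = S) (h : LinearMap.range R.mulVecLin ≤ LinearMap.range S.mulVecLin) :
    S * R = R := by
  refine ext_iff_mulVec.2 fun v => ?_
  obtain ⟨w, hw⟩ := h ⟨v, rfl⟩
  simp only [mulVecLin_apply] at hw
  rw [← mulVec_mulVec, ← hw, mulVec_mulVec, hS]

theorem range_mulVecLin_mul_le [Fintype l] [Fintype m] (A : Matrix n m ℂ) (B : Matrix m l ℂ) :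
    LinearMap.range (A * B).mulVecLin ≤ LinearMap.range A.mulVecLin := by
  rw [mulVecLin_mul]
  exact LinearMap.range_comp_le_range _ _

theorem one_sub_mulVec_eq_zero_iff [Fintype n] [DecidableEq n] {P : Matrix n n ℂ}
    (hP : P * P = P) {v : n → ℂ} :
    (1 - P) *ᵥ v = 0 ↔ v ∈ LinearMap.range P.mulVecLin := by
  constructor
  · intro hv
    rw [sub_mulVec, one_mulVec, sub_eq_zero] at hv
    exact ⟨v, hv.symm⟩
  · rintro ⟨w, rfl⟩
    simp only [mulVecLin_apply, mulVec_mulVec, sub_mul, one_mul, hP, sub_self, zero_mulVec]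

theorem finrank_range_mulVecLin_of_injective [Fintype m] {M : Matrix n m ℂ}
    (hM : Function.Injective M.mulVec) :
    Module.finrank ℂ (LinearMap.range M.mulVecLin) = Fintype.card m := by
  rw [LinearMap.finrank_range_of_inj hM, Module.finrank_fintype_fun_eq_card]

theorem injective_mulVec_of_injective_mul [Fintype m] [Fintype n]
    {A : Matrix l n ℂ} {M : Matrix n m ℂ} (h : Function.Injective (A * M).mulVec) :
    Function.Injective M.mulVec :=
  fun x y hxy => h (by simp only [← mulVec_mulVec, hxy])

end Range

theorem exists_injective_conjTranspose_mul_eq_zero {n i k : ℕ} {E : Matrix (Fin n) (Fin i) ℂ}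
    (hE : Function.Injective E.mulVec) (hik : i + k = n) :
    ∃ B : Matrix (Fin n) (Fin k) ℂ, Function.Injective B.mulVec ∧ Eᴴ * B = 0 := by
  have hker : finrank ℂ (LinearMap.ker Eᴴ.mulVecLin) = k := by
    have h1 := LinearMap.finrank_range_add_finrank_ker Eᴴ.mulVecLin
    have h2 : Eᴴ.rank = i := by
      rw [rank_conjTranspose, rank, finrank_range_mulVecLin_of_injective hE, Fintype.card_fin]
    rw [rank] at h2
    rw [h2, Module.finrank_fin_fun] at h1
    omega
  obtain ⟨B, hB, hBr⟩ := (LinearMap.ker Eᴴ.mulVecLin).exists_injective_matrix_range_eq hker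
  refine ⟨B, hB, ext_iff_mulVec.2 fun v => ?_⟩
  rw [zero_mulVec, ← mulVec_mulVec]
  exact LinearMap.mem_ker.1 (hBr ▸ ⟨v, rfl⟩ : B *ᵥ v ∈ LinearMap.ker Eᴴ.mulVecLin)

section ColProj

variable {l m n : Type*} [Fintype m] [Fintype n] [DecidableEq m]

theorem isUnit_det_conjTranspose_mul_self {M : Matrix n m ℂ}
    (hM : Function.Injective M.mulVec) : IsUnit (Mᴴ * M).det := by
  rw [← isUnit_iff_isUnit_det, ← mulVec_injective_iff_isUnit]
  change Function.Injective (Mᴴ * M).mulVecLin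
  rw [← LinearMap.ker_eq_bot, ker_mulVecLin_conjTranspose_mul_self, LinearMap.ker_eq_bot]
  exact hM

theorem _root_.Continuous.matrix_inv_of_det_ne_zero {X : Type*} [TopologicalSpace X]
    {f : X → Matrix m m ℂ} (hf : Continuous f) (h : ∀ x, (f x).det ≠ 0) :
    Continuous fun x => (f x)⁻¹ := by
  simp_rw [inv_def, Ring.inverse_eq_inv]
  exact (hf.matrix_det.inv₀ h).smul hf.matrix_adjugate

/-- The Moore–Penrose pseudoinverse of a matrix with linearly independent columns. -/
noncomputable def pinv (M : Matrix n m ℂ) : Matrix m n ℂ := (Mᴴ * M)⁻¹ * Mᴴ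

theorem pinv_mul_cancel {M : Matrix n m ℂ} (hM : Function.Injective M.mulVec) :
    pinv M * M = 1 := by
  rw [pinv, Matrix.mul_assoc, nonsing_inv_mul _ (isUnit_det_conjTranspose_mul_self hM)]

theorem _root_.Continuous.matrix_pinv {X : Type*} [TopologicalSpace X] {f : X → Matrix n m ℂ}
    (hf : Continuous f) (h : ∀ x, Function.Injective (f x).mulVec) :
    Continuous fun x => pinv (f x) :=
  (hf.matrix_conjTranspose.matrix_mul hf).matrix_inv_of_det_ne_zero
    (fun x => (isUnit_det_conjTranspose_mul_self (h x)).ne_zero) |>.matrix_mul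
    hf.matrix_conjTranspose

noncomputable def colProj (M : Matrix n m ℂ) : Matrix n n ℂ := M * pinv M

variable {M : Matrix n m ℂ}

theorem colProj_mul_self (hM : Function.Injective M.mulVec) : colProj M * M = M := by
  rw [colProj, Matrix.mul_assoc, pinv_mul_cancel hM, Matrix.mul_one]

theorem colProj_mul_colProj (hM : Function.Injective M.mulVec) :
    colProj M * colProj M = colProj M := by
  rw [colProj, ← Matrix.mul_assoc, Matrix.mul_assoc M, pinv_mul_cancel hM, Matrix.mul_one]

theorem conjTranspose_colProj (M : Matrix n m ℂ) : (colProj M)ᴴ = colProj M := by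
  simp only [colProj, pinv, conjTranspose_mul, conjTranspose_nonsing_inv,
    conjTranspose_conjTranspose, Matrix.mul_assoc]

theorem range_colProj (hM : Function.Injective M.mulVec) :
    LinearMap.range (colProj M).mulVecLin = LinearMap.range M.mulVecLin := by
  refine le_antisymm (range_mulVecLin_mul_le _ _) ?_
  conv_lhs => rw [← colProj_mul_self hM]
  exact range_mulVecLin_mul_le _ _

theorem colProj_mul_of_range_le [Fintype l] (hM : Function.Injective M.mulVec)
    {A : Matrix n l ℂ} (h : LinearMap.range A.mulVecLin ≤ LinearMap.range M.mulVecLin) :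
    colProj M * A = A :=
  mul_eq_right_of_range_le (colProj_mul_colProj hM) (range_colProj hM ▸ h)

theorem rank_colProj (hM : Function.Injective M.mulVec) : (colProj M).rank = Fintype.card m := by
  rw [rank, range_colProj hM, finrank_range_mulVecLin_of_injective hM]

theorem _root_.Continuous.matrix_colProj {X : Type*} [TopologicalSpace X]
    {f : X → Matrix n m ℂ} (hf : Continuous f) (h : ∀ x, Function.Injective (f x).mulVec) :
    Continuous fun x => colProj (f x) :=
  hf.matrix_mul (hf.matrix_pinv h)

end ColProj

section Transversal

variable {n k m : Type*} [Fintype k] [Fintype m]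

def Transversal (B : Matrix n k ℂ) (E : Matrix n m ℂ) : Prop :=
  ∀ v x, B *ᵥ v + E *ᵥ x = 0 → v = 0 ∧ x = 0

theorem Transversal.of_mul_eq_zero {l : Type*} [Fintype n] {B : Matrix n k ℂ}
    {E : Matrix n m ℂ} {C : Matrix l n ℂ} (hB : Function.Injective B.mulVec) (hCB : C * B = 0)
    (hCE : Function.Injective (C * E).mulVec) : Transversal B E := by
  intro v x hvx
  have hx : x = 0 := by
    refine (injective_iff_map_eq_zero (C * E).mulVecLin).1 hCE x ?_
    simpa [mulVec_add, mulVec_mulVec, hCB] using congrArg (C *ᵥ ·) hvx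
  subst hx
  exact ⟨(injective_iff_map_eq_zero B.mulVecLin).1 hB v (by simpa using hvx), rfl⟩

namespace Transversal

variable {B : Matrix n k ℂ} {E : Matrix n m ℂ}

theorem injective_right (h : Transversal B E) : Function.Injective E.mulVec :=
  (injective_iff_map_eq_zero E.mulVecLin).2 fun x hx => (h 0 x (by simpa using hx)).2

theorem injective_add_mul (h : Transversal B E) (X : Matrix m k ℂ) :
    Function.Injective (B + E * X).mulVec :=
  (injective_iff_map_eq_zero (B + E * X).mulVecLin).2 fun v hv =>
    (h v (X *ᵥ v) (by simpa [add_mulVec, mulVec_mulVec] using hv)).1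

theorem disjoint_range_add_mul (h : Transversal B E) (X : Matrix m k ℂ) :
    Disjoint (LinearMap.range (B + E * X).mulVecLin) (LinearMap.range E.mulVecLin) := by
  rw [Submodule.disjoint_def]
  rintro _ ⟨v, rfl⟩ ⟨x, hx⟩
  have hv : B *ᵥ v + E *ᵥ (X *ᵥ v - x) = 0 := by
    simp only [mulVecLin_apply] at hx
    rw [mulVec_sub, mulVec_mulVec, add_sub, ← add_mulVec, hx, sub_self]
  simp [(h _ _ hv).1]

theorem isCompl_range_add_mul [Fintype n] (h : Transversal B E)
    (hdim : Fintype.card m + Fintype.card k = Fintype.card n)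
    (X : Matrix m k ℂ) :
    IsCompl (LinearMap.range (B + E * X).mulVecLin) (LinearMap.range E.mulVecLin) := by
  refine (Submodule.isCompl_iff_disjoint _ _ ?_).2 (h.disjoint_range_add_mul X)
  rw [finrank_range_mulVecLin_of_injective (h.injective_add_mul X),
    finrank_range_mulVecLin_of_injective h.injective_right, Module.finrank_fintype_fun_eq_card]
  omega

end Transversal

end Transversal

section GraphCoord

variable {n k m : Type*} [Fintype n] [Fintype m] [DecidableEq n]

/-- The least-squares solution `X` of `(1 - P) * (B + E * X) = 0`, i.e. the coordinate of
`range P` in the chart of graphs over `range B`. -/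
noncomputable def graphCoord [DecidableEq m] (B : Matrix n k ℂ) (E : Matrix n m ℂ)
    (P : Matrix n n ℂ) : Matrix m k ℂ :=
  -(pinv ((1 - P) * E) * ((1 - P) * B))

variable {B : Matrix n k ℂ} {E : Matrix n m ℂ} {P : Matrix n n ℂ}

theorem injective_one_sub_mul (hP : P * P = P) (hE : Function.Injective E.mulVec)
    (hd : Disjoint (LinearMap.range P.mulVecLin) (LinearMap.range E.mulVecLin)) :
    Function.Injective ((1 - P) * E).mulVec := by
  refine (injective_iff_map_eq_zero ((1 - P) * E).mulVecLin).2 fun x hx => ?_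
  rw [mulVecLin_apply, ← mulVec_mulVec, one_sub_mulVec_eq_zero_iff hP] at hx
  exact (injective_iff_map_eq_zero E.mulVecLin).1 hE x
    (Submodule.disjoint_def.1 hd _ hx ⟨x, rfl⟩)

theorem graphCoord_eq [DecidableEq m] (hF : Function.Injective ((1 - P) * E).mulVec)
    {X : Matrix m k ℂ} (hX : (1 - P) * (B + E * X) = 0) : graphCoord B E P = X := by
  have hB : (1 - P) * B = -(((1 - P) * E) * X) := by
    rw [eq_neg_iff_add_eq_zero, Matrix.mul_assoc, ← Matrix.mul_add, hX]
  rw [graphCoord, hB, Matrix.mul_neg, neg_neg, ← Matrix.mul_assoc, pinv_mul_cancel hF,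
    Matrix.one_mul]

theorem one_sub_mul_add_mul_graphCoord [Fintype k] [DecidableEq m] (hP : P * P = P)
    (hF : Function.Injective ((1 - P) * E).mulVec)
    (hc : Codisjoint (LinearMap.range P.mulVecLin) (LinearMap.range E.mulVecLin)) :
    (1 - P) * (B + E * graphCoord B E P) = 0 := by
  have hrange : LinearMap.range ((1 - P) * B).mulVecLin ≤
      LinearMap.range ((1 - P) * E).mulVecLin := by
    rintro _ ⟨v, rfl⟩
    obtain ⟨_, ⟨w, rfl⟩, _, ⟨x, rfl⟩, hwx⟩ :=
      Submodule.mem_sup.1 (hc.eq_top ▸ Submodule.mem_top : B *ᵥ v ∈ _)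
    refine ⟨x, ?_⟩
    simp only [mulVecLin_apply] at hwx ⊢
    have hw : (1 - P) *ᵥ (P *ᵥ w) = 0 := (one_sub_mulVec_eq_zero_iff hP).2 ⟨w, rfl⟩
    rw [← mulVec_mulVec, ← mulVec_mulVec, ← hwx, mulVec_add, hw, zero_add]
  have hexpand : (1 - P) * (B + E * graphCoord B E P) =
      (1 - P) * B - colProj ((1 - P) * E) * ((1 - P) * B) := by
    simp only [graphCoord, colProj, Matrix.mul_add, Matrix.mul_neg, Matrix.mul_assoc,
      sub_eq_add_neg]
  rw [hexpand, colProj_mul_of_range_le hF hrange, sub_self]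

theorem _root_.Continuous.matrix_graphCoord [DecidableEq m] {X : Type*} [TopologicalSpace X]
    {B : X → Matrix n k ℂ} {E : X → Matrix n m ℂ} {P : X → Matrix n n ℂ}
    (hB : Continuous B) (hE : Continuous E) (hP : Continuous P)
    (h : ∀ x, Function.Injective ((1 - P x) * E x).mulVec) :
    Continuous fun x => graphCoord (B x) (E x) (P x) := by
  have hQ : Continuous fun x => 1 - P x := continuous_const.sub hP
  exact ((hQ.matrix_mul hE).matrix_pinv h |>.matrix_mul (hQ.matrix_mul hB)).neg

end GraphCoord

end Matrix

namespace Grass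

variable {k n : ℕ}

theorem finrank_sp (W : Grass k n) : finrank ℂ W.sp = k := W.2.2.2

theorem sp_injective : Function.Injective (sp : Grass k n → Submodule ℂ (Fin n → ℂ)) := by
  intro P Q hPQ
  have hQP : Q.1 * P.1 = P.1 := mul_eq_right_of_range_le Q.2.1 hPQ.le
  have hPQ' : P.1 * Q.1 = Q.1 := mul_eq_right_of_range_le P.2.1 hPQ.ge
  apply Subtype.ext
  calc P.1 = (Q.1 * P.1)ᴴ := by rw [hQP, P.2.2.1]
    _ = Q.1 := by rw [conjTranspose_mul, P.2.2.1, Q.2.2.1, hPQ']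

noncomputable def ofInjective (M : Matrix (Fin n) (Fin k) ℂ)
    (hM : Function.Injective M.mulVec) : Grass k n :=
  ⟨colProj M, colProj_mul_colProj hM, conjTranspose_colProj M, by
    rw [rank_colProj hM, Fintype.card_fin]⟩

theorem sp_ofInjective {M : Matrix (Fin n) (Fin k) ℂ} (hM : Function.Injective M.mulVec) :
    (ofInjective M hM).sp = LinearMap.range M.mulVecLin :=
  range_colProj hM

theorem _root_.Continuous.grassOfInjective {X : Type*} [TopologicalSpace X]
    {f : X → Matrix (Fin n) (Fin k) ℂ} (hf : Continuous f)
    (h : ∀ x, Function.Injective (f x).mulVec) :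
    Continuous fun x => ofInjective (f x) (h x) :=
  (hf.matrix_colProj h).subtype_mk _

theorem star_vecMul (W : Grass k n) (u : Fin n → ℂ) : star u ᵥ* W.1 = star (W.1 *ᵥ u) := by
  rw [star_mulVec, W.2.2.1]

theorem dotProduct_mulVec_self (W : Grass k n) (u : Fin n → ℂ) :
    star u ⬝ᵥ (W.1 *ᵥ u) = star (W.1 *ᵥ u) ⬝ᵥ (W.1 *ᵥ u) := by
  conv_lhs => rw [← W.2.1, ← mulVec_mulVec]
  rw [dotProduct_mulVec, star_vecMul]

theorem dotProduct_eq_zero_of_mulVec_eq_zero (W : Grass k n) {u v : Fin n → ℂ}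
    (hu : W.1 *ᵥ u = 0) (hv : v ∈ W.sp) : star u ⬝ᵥ v = 0 := by
  obtain ⟨w, rfl⟩ := hv
  rw [mulVecLin_apply, dotProduct_mulVec, star_vecMul, hu, star_zero, zero_dotProduct]

theorem iSup_sp_snoc {h : ℕ} (f : Fin h → Grass k n) (W : Grass k n) :
    ⨆ j, (Fin.snoc (α := fun _ => Grass k n) f W j).sp = (⨆ j, (f j).sp) ⊔ W.sp := by
  rw [← Fin.iSup_snoc]
  exact congrArg iSup (Fin.comp_snoc sp f W)

variable {m : ℕ} {B : Matrix (Fin n) (Fin k) ℂ} {E : Matrix (Fin n) (Fin m) ℂ}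

theorem graphCoord_ofInjective (h : Transversal B E) (X : Matrix (Fin m) (Fin k) ℂ) :
    graphCoord B E (ofInjective (B + E * X) (h.injective_add_mul X)).1 = X := by
  have hM := h.injective_add_mul X
  refine graphCoord_eq (injective_one_sub_mul (colProj_mul_colProj hM) h.injective_right ?_) ?_
  · exact (range_colProj hM).symm ▸ h.disjoint_range_add_mul X
  · rw [Matrix.sub_mul, Matrix.one_mul, colProj_mul_self hM, sub_self]

theorem isCompl_sp_ofInjective (hdim : m + k = n) (h : Transversal B E)
    {U : Submodule ℂ (Fin n → ℂ)} (hU : LinearMap.range E.mulVecLin = U)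
    (X : Matrix (Fin m) (Fin k) ℂ) :
    IsCompl (ofInjective (B + E * X) (h.injective_add_mul X)).sp U := by
  rw [sp_ofInjective, ← hU]
  exact h.isCompl_range_add_mul (by simpa using hdim) X

theorem ofInjective_graphCoord (h : Transversal B E) {U : Submodule ℂ (Fin n → ℂ)}
    (hU : LinearMap.range E.mulVecLin = U) {W : Grass k n} (hW : IsCompl W.sp U) :
    ofInjective (B + E * graphCoord B E W.1) (h.injective_add_mul _) = W := by
  subst hU
  have hsol := one_sub_mul_add_mul_graphCoord (B := B) W.2.1
    (injective_one_sub_mul W.2.1 h.injective_right hW.disjoint) hW.codisjoint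
  refine sp_injective (Submodule.eq_of_le_of_finrank_eq ?_ (by rw [finrank_sp, finrank_sp]))
  rw [sp_ofInjective]
  rintro _ ⟨v, rfl⟩
  refine (one_sub_mulVec_eq_zero_iff W.2.1).1 ?_
  rw [mulVecLin_apply, mulVec_mulVec, hsol, zero_mulVec]

end Grass

namespace IsLocTrivFibration

variable {E B F : Type*} [TopologicalSpace E] [TopologicalSpace B] [TopologicalSpace F]
  {p : E → B}

theorem congr_fiber {F' : Type*} [TopologicalSpace F'] (hp : IsLocTrivFibration F p)
    (φ : F ≃ₜ F') : IsLocTrivFibration F' p := by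
  intro b
  obtain ⟨U, hU, hb, e, he⟩ := hp b
  exact ⟨U, hU, hb, e.trans ((Homeomorph.refl U).prodCongr φ), he⟩

theorem comp_homeomorph {E' : Type*} [TopologicalSpace E'] {q : E' → B}
    (hq : IsLocTrivFibration F q) (Φ : E ≃ₜ E') (hΦ : ∀ x, q (Φ x) = p x) :
    IsLocTrivFibration F p := by
  intro b
  obtain ⟨U, hU, hb, e, he⟩ := hq b
  refine ⟨U, hU, hb, (Φ.subtype fun x => by rw [hΦ]).trans e, fun x => ?_⟩
  rw [← hΦ]
  exact he _

theorem nonempty_fiber_homeomorph (hp : IsLocTrivFibration F p) (b : B) :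
    Nonempty ({x // p x = b} ≃ₜ F) := by
  obtain ⟨U, -, hb, e, he⟩ := hp b
  have hfib : ∀ f : F, p (e.symm (⟨b, hb⟩, f)).1 = b := fun f => by
    rw [← he, e.apply_symm_apply]
  refine ⟨{
    toFun := fun x => (e ⟨x.1, Set.mem_of_eq_of_mem x.2 hb⟩).2
    invFun := fun f => ⟨(e.symm (⟨b, hb⟩, f)).1, hfib f⟩
    left_inv := fun x => Subtype.ext ?_
    right_inv := fun f => by simp
    continuous_toFun := continuous_snd.comp (e.continuous.comp
      (continuous_subtype_val.subtype_mk _))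
    continuous_invFun := (continuous_subtype_val.comp (e.symm.continuous.comp
      (continuous_const.prodMk continuous_id))).subtype_mk _ }⟩
  have hx : (⟨b, hb⟩, (e ⟨x.1, Set.mem_of_eq_of_mem x.2 hb⟩).2) =
      e ⟨x.1, Set.mem_of_eq_of_mem x.2 hb⟩ :=
    Prod.ext (Subtype.ext ((he _).trans x.2).symm) rfl
  simp only [hx, e.symm_apply_apply]

end IsLocTrivFibration

abbrev ComplementBundle {T : Type*} (k : ℕ) {n : ℕ} (S : T → Submodule ℂ (Fin n → ℂ)) :
    Type _ :=
  {p : T × Grass k n // IsCompl p.2.sp (S p.1)}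

namespace ComplementBundle

variable {T : Type*} [TopologicalSpace T] {k m n : ℕ} {S : T → Submodule ℂ (Fin n → ℂ)}

noncomputable def homeomorphOfFrame (hdim : m + k = n) (B : Matrix (Fin n) (Fin k) ℂ)
    {E : T → Matrix (Fin n) (Fin m) ℂ} (hE : Continuous E) (hBE : ∀ t, Transversal B (E t))
    (hES : ∀ t, LinearMap.range (E t).mulVecLin = S t) :
    ComplementBundle k S ≃ₜ T × Matrix (Fin m) (Fin k) ℂ where
  toFun p := (p.1.1, graphCoord B (E p.1.1) p.1.2.1)
  invFun q := ⟨(q.1, Grass.ofInjective _ ((hBE q.1).injective_add_mul q.2)),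
    Grass.isCompl_sp_ofInjective hdim (hBE q.1) (hES q.1) q.2⟩
  left_inv p := Subtype.ext <| Prod.ext rfl <| Grass.ofInjective_graphCoord (hBE _) (hES _) p.2
  right_inv q := Prod.ext rfl (Grass.graphCoord_ofInjective (hBE q.1) q.2)
  continuous_toFun := by
    refine continuous_subtype_val.fst.prodMk (Continuous.matrix_graphCoord continuous_const
      (hE.comp continuous_subtype_val.fst) (by fun_prop) fun p => ?_)
    exact injective_one_sub_mul p.1.2.2.1 (hBE _).injective_right
      ((hES _).symm ▸ p.2.disjoint)
  continuous_invFun :=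
    (continuous_fst.prodMk (Continuous.grassOfInjective
      (continuous_const.add ((hE.comp continuous_fst).matrix_mul continuous_snd))
      fun q => (hBE q.1).injective_add_mul q.2)).subtype_mk _

def restrictHomeomorph (U : Set T) :
    {p : ComplementBundle k S // p.1.1 ∈ U} ≃ₜ ComplementBundle k fun t : U => S t where
  toFun p := ⟨(⟨p.1.1.1, p.2⟩, p.1.1.2), p.1.2⟩
  invFun q := ⟨⟨(q.1.1, q.1.2), q.2⟩, q.1.1.2⟩
  continuous_toFun := by fun_prop
  continuous_invFun := by fun_prop

def fiberHomeomorph (t : T) :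
    {p : ComplementBundle k S // p.1.1 = t} ≃ₜ {W : Grass k n // IsCompl W.sp (S t)} where
  toFun p := ⟨p.1.1.2, by have hp := p.1.2; rwa [p.2] at hp⟩
  invFun W := ⟨⟨(t, W.1), W.2⟩, rfl⟩
  left_inv p := by
    obtain ⟨⟨⟨t', W⟩, hW⟩, rfl⟩ := p
    rfl
  continuous_toFun := by fun_prop
  continuous_invFun := by fun_prop

theorem isLocTrivFibration (hdim : m + k = n)
    (hS : ∀ t₀, ∃ U : Set T, IsOpen U ∧ t₀ ∈ U ∧ ∃ (B : Matrix (Fin n) (Fin k) ℂ)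
      (E : T → Matrix (Fin n) (Fin m) ℂ), ContinuousOn E U ∧
        ∀ t ∈ U, Transversal B (E t) ∧ LinearMap.range (E t).mulVecLin = S t) :
    IsLocTrivFibration (Matrix (Fin m) (Fin k) ℂ) fun p : ComplementBundle k S => p.1.1 := by
  intro t₀
  obtain ⟨U, hU, ht₀, B, E, hE, hBE⟩ := hS t₀
  exact ⟨U, hU, ht₀, (restrictHomeomorph U).trans (homeomorphOfFrame hdim B hE.domRestrict
    (fun t => (hBE t t.2).1) fun t => (hBE t t.2).2), fun _ => rfl⟩

end ComplementBundle

namespace Config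

variable {h i k n : ℕ}

noncomputable def sumSpace (V : Config h i k n) : Submodule ℂ (Fin n → ℂ) :=
  ⨆ j, (V.1 j).sp

theorem finrank_sumSpace (V : Config h i k n) : finrank ℂ V.sumSpace = i := V.2.2

noncomputable def projSum (V : Config h i k n) : Matrix (Fin n) (Fin n) ℂ :=
  ∑ j, (V.1 j).1

theorem continuous_projSum :
    Continuous (projSum : Config h i k n → Matrix (Fin n) (Fin n) ℂ) :=
  continuous_finsetSum _ fun j _ =>
    continuous_subtype_val.comp ((continuous_apply j).comp continuous_subtype_val)

theorem range_projSum_le (V : Config h i k n) :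
    LinearMap.range (projSum V).mulVecLin ≤ V.sumSpace := by
  rintro _ ⟨v, rfl⟩
  rw [mulVecLin_apply, projSum, sum_mulVec]
  exact Submodule.sum_mem _ fun j _ => le_iSup (fun j => (V.1 j).sp) j ⟨v, rfl⟩

theorem eq_zero_of_dotProduct_projSum_eq_zero (V : Config h i k n) {u : Fin n → ℂ}
    (hu : u ∈ V.sumSpace) (h0 : star u ⬝ᵥ (projSum V *ᵥ u) = 0) : u = 0 := by
  have hPu : ∀ j, (V.1 j).1 *ᵥ u = 0 := by
    rw [projSum, sum_mulVec, dotProduct_sum] at h0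
    simp only [Grass.dotProduct_mulVec_self] at h0
    intro j
    exact dotProduct_star_self_eq_zero.1 ((Finset.sum_eq_zero_iff_of_nonneg
      fun j _ => dotProduct_star_self_nonneg _).1 h0 j (Finset.mem_univ j))
  have horth : ∀ v ∈ V.sumSpace, star u ⬝ᵥ v = 0 := fun v hv =>
    Submodule.iSup_induction _ (motive := fun v => star u ⬝ᵥ v = 0) hv
      (fun j _ hv => (V.1 j).dotProduct_eq_zero_of_mulVec_eq_zero (hPu j) hv)
      (dotProduct_zero _) fun a b ha hb => by rw [dotProduct_add, ha, hb, add_zero]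
  exact dotProduct_star_self_eq_zero.1 (horth u hu)

theorem det_conjTranspose_mul_projSum_mul_ne_zero (V : Config h i k n)
    {E : Matrix (Fin n) (Fin i) ℂ} (hE : Function.Injective E.mulVec)
    (hEV : LinearMap.range E.mulVecLin = V.sumSpace) : (Eᴴ * (projSum V * E)).det ≠ 0 := by
  rw [← isUnit_iff_ne_zero, ← isUnit_iff_isUnit_det, ← mulVec_injective_iff_isUnit]
  refine (injective_iff_map_eq_zero (Eᴴ * (projSum V * E)).mulVecLin).2 fun y hy => ?_
  have h0 : star (E *ᵥ y) ⬝ᵥ (projSum V *ᵥ (E *ᵥ y)) = 0 := by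
    simp only [mulVecLin_apply, ← mulVec_mulVec] at hy
    rw [star_mulVec, ← dotProduct_mulVec, hy, dotProduct_zero]
  exact (injective_iff_map_eq_zero E.mulVecLin).1 hE y
    (V.eq_zero_of_dotProduct_projSum_eq_zero (hEV ▸ ⟨y, rfl⟩) h0)

theorem range_projSum_mul {E : Matrix (Fin n) (Fin i) ℂ} (V : Config h i k n)
    (hdet : (Eᴴ * (projSum V * E)).det ≠ 0) :
    LinearMap.range (projSum V * E).mulVecLin = V.sumSpace := by
  have hinj := injective_mulVec_of_injective_mul (mulVec_injective_iff_isUnit.2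
    ((isUnit_iff_isUnit_det _).2 (isUnit_iff_ne_zero.2 hdet)))
  refine Submodule.eq_of_le_of_finrank_eq ((range_mulVecLin_mul_le _ _).trans V.range_projSum_le) ?_
  rw [finrank_range_mulVecLin_of_injective hinj, Fintype.card_fin, finrank_sumSpace]

theorem exists_localFrame (hik : i + k = n) (V₀ : Config h i k n) :
    ∃ U : Set (Config h i k n), IsOpen U ∧ V₀ ∈ U ∧ ∃ (B : Matrix (Fin n) (Fin k) ℂ)
      (E : Config h i k n → Matrix (Fin n) (Fin i) ℂ), ContinuousOn E U ∧
        ∀ V ∈ U, Transversal B (E V) ∧ LinearMap.range (E V).mulVecLin = V.sumSpace := by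
  obtain ⟨E₀, hE₀, hE₀V₀⟩ :=
    V₀.sumSpace.exists_injective_matrix_range_eq V₀.finrank_sumSpace
  obtain ⟨B, hB, hE₀B⟩ := exists_injective_conjTranspose_mul_eq_zero hE₀ hik
  have hE : Continuous fun V : Config h i k n => projSum V * E₀ :=
    continuous_projSum.matrix_mul continuous_const
  refine ⟨{V | (E₀ᴴ * (projSum V * E₀)).det ≠ 0},
    isOpen_ne.preimage (continuous_const.matrix_mul hE).matrix_det,
    V₀.det_conjTranspose_mul_projSum_mul_ne_zero hE₀ hE₀V₀, B, _, hE.continuousOn,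
    fun V hV => ⟨?_, V.range_projSum_mul hV⟩⟩
  exact Transversal.of_mul_eq_zero hB hE₀B
    (mulVec_injective_iff_isUnit.2 ((isUnit_iff_isUnit_det _).2 (Ne.isUnit hV)))

theorem not_mem_range_of_isCompl (hk : 0 < k) (V : Config h i k n) {W : Grass k n}
    (hW : IsCompl W.sp V.sumSpace) : W ∉ Set.range V.1 := by
  rintro ⟨j, rfl⟩
  have hbot : (V.1 j).sp = ⊥ := hW.disjoint.eq_bot_of_le (le_iSup (fun j => (V.1 j).sp) j)
  have := (V.1 j).finrank_sp
  rw [hbot, finrank_bot] at this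
  omega

noncomputable def snoc (hk : 0 < k) (V : Config h i k n) (W : Grass k n)
    (hW : IsCompl W.sp V.sumSpace) : Config (h + 1) n k n :=
  ⟨Fin.snoc V.1 W, Fin.snoc_injective_of_injective V.2.1 (V.not_mem_range_of_isCompl hk hW), by
    rw [Grass.iSup_sp_snoc, ← sumSpace, hW.symm.sup_eq_top, finrank_top,
      Module.finrank_fin_fun]⟩

variable (pr : Config (h + 1) n k n → Config h i k n)

theorem snoc_pr_last (hpr : ∀ H j, (pr H).1 j = H.1 j.castSucc)
    (H : Config (h + 1) n k n) :
    Fin.snoc (α := fun _ => Grass k n) (pr H).1 (H.1 (Fin.last h)) = H.1 := by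
  rw [show (pr H).1 = Fin.init H.1 from funext (hpr H), Fin.snoc_init_self]

theorem pr_snoc (hpr : ∀ H j, (pr H).1 j = H.1 j.castSucc) (hk : 0 < k) (V : Config h i k n)
    (W : Grass k n) (hW : IsCompl W.sp V.sumSpace) : pr (snoc hk V W hW) = V :=
  Subtype.ext <| funext fun j => by
    rw [hpr]
    exact Fin.snoc_castSucc (α := fun _ => Grass k n) _ _ _

theorem continuous_of_eq_init (hpr : ∀ H j, (pr H).1 j = H.1 j.castSucc) :
    Continuous pr := by
  have hinit : (fun H => (pr H).1) = fun H : Config (h + 1) n k n => Fin.init H.1 :=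
    funext fun H => funext (hpr H)
  refine continuous_induced_rng.2 ?_
  change Continuous fun H => (pr H).1
  rw [hinit]
  exact continuous_subtype_val.finInit

theorem isCompl_last (hpr : ∀ H j, (pr H).1 j = H.1 j.castSucc) (hik : i + k = n)
    (H : Config (h + 1) n k n) : IsCompl (H.1 (Fin.last h)).sp (pr H).sumSpace := by
  refine Submodule.isCompl_of_sup_eq_top ?_ ?_
  · rw [sup_comm, sumSpace, ← Grass.iSup_sp_snoc, snoc_pr_last pr hpr]
    exact Submodule.eq_top_of_finrank_eq (by rw [H.2.2, Module.finrank_fin_fun])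
  · rw [Grass.finrank_sp, finrank_sumSpace, Module.finrank_fin_fun]
    omega

noncomputable def snocHomeomorph (hpr : ∀ H j, (pr H).1 j = H.1 j.castSucc) (hk : 0 < k)
    (hik : i + k = n) :
    Config (h + 1) n k n ≃ₜ ComplementBundle k (sumSpace : Config h i k n → _) where
  toFun H := ⟨(pr H, H.1 (Fin.last h)), isCompl_last pr hpr hik H⟩
  invFun p := snoc hk p.1.1 p.1.2 p.2
  left_inv H := Subtype.ext (snoc_pr_last pr hpr H)
  right_inv p := Subtype.ext <|
    Prod.ext (pr_snoc pr hpr hk _ _ _) (Fin.snoc_last (α := fun _ => Grass k n) _ _)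
  continuous_toFun := ((continuous_of_eq_init pr hpr).prodMk
    ((continuous_apply _).comp continuous_subtype_val)).subtype_mk _
  continuous_invFun := (Continuous.finSnoc (by fun_prop) (by fun_prop)).subtype_mk _

end Config

/-- The projection onto the first `h - 1` coordinates
`pr : F_h^{kh}(k,kh) → F_{h-1}^{k(h-1)}(k,kh)` is a locally trivial fibration whose fiber
over a point `V₀ = (H₁, …, H_{h-1})` is the set of `H ∈ Gr(k,kh)` with
`H ⊕ (H₁ + ⋯ + H_{h-1}) = ℂ^{kh}`, which is homeomorphic to `ℂ^{k(kh-k)}`. -/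
theorem pr_fibration (h k : ℕ) (hh : 2 ≤ h) (hk : 0 < k)
    (pr : Config h (k * h) k (k * h) → Config (h - 1) (k * (h - 1)) k (k * h))
    (hpr : ∀ (H : Config h (k * h) k (k * h)) (j : Fin (h - 1)),
      (pr H).1 j = H.1 (Fin.castLE (Nat.sub_le h 1) j)) :
    IsLocTrivFibration (Fin (k * (k * h - k)) → ℂ) pr ∧
    ∀ V₀ : Config (h - 1) (k * (h - 1)) k (k * h),
      Nonempty ({H : Config h (k * h) k (k * h) // pr H = V₀} ≃ₜ
        {W : Grass k (k * h) //
          IsCompl W.sp (⨆ j, ((V₀.1 j).sp) : Submodule ℂ (Fin (k * h) → ℂ))}) ∧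
      Nonempty ({W : Grass k (k * h) //
          IsCompl W.sp (⨆ j, ((V₀.1 j).sp) : Submodule ℂ (Fin (k * h) → ℂ))} ≃ₜ
        (Fin (k * (k * h - k)) → ℂ)) := by
  obtain ⟨h, rfl⟩ : ∃ h', h = h' + 1 := ⟨h - 1, by omega⟩
  have hik : k * h + k = k * (h + 1) := (Nat.mul_succ k h).symm
  let Φ := Config.snocHomeomorph pr hpr hk hik
  have hfib : IsLocTrivFibration (Matrix (Fin (k * h)) (Fin k) ℂ) pr :=
    (ComplementBundle.isLocTrivFibration hik (Config.exists_localFrame hik)).comp_homeomorph Φ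
      fun _ => rfl
  have hdim : finrank ℂ (Matrix (Fin (k * h)) (Fin k) ℂ) =
      finrank ℂ (Fin (k * (k * (h + 1) - k)) → ℂ) := by
    simp [Module.finrank_matrix, ← hik, mul_comm]
  have hfib' := hfib.congr_fiber (ContinuousLinearEquiv.ofFinrankEq hdim).toHomeomorph
  refine ⟨hfib', fun V₀ => ?_⟩
  let eV := (Φ.subtype fun _ => Iff.rfl).trans (ComplementBundle.fiberHomeomorph V₀)
  obtain ⟨eF⟩ := hfib'.nonempty_fiber_homeomorph V₀
  exact ⟨⟨eV⟩, ⟨eV.symm.trans eF⟩⟩
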